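/- arXiv:1608.02871 — 5 statements merged into one kernel-verified Lean document; each statement's English description precedes it below -/
import Mathlib

section
/- Let V be a finite-dimensional real vector space, W ⊆ V a linear subspace, χ ∈ V a vector not belonging to W, and α ∈ ⋀²V. If χ ∧ α belongs to the two-sided ideal of Λ(V) generated by W, then α ∧ α also belongs to that ideal. -/
/-!
Choose a functional `φ` with `φ χ = 1` vanishing on `W`. Contraction by `φ` is an
antiderivation of `Λ(V)` that kills the generators `ι w` of the ideal `I` generated by `W`, so
it preserves `I`. Applied to `χ ∧ α ∈ I` it gives `α - χ ∧ v ∈ I`, where `v = φ ⌋ α` is a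
vector because `α` has degree two. Hence `α ≡ χ ∧ v` modulo `I`, and `(χ ∧ v) ∧ (χ ∧ v) = 0`.
-/

open CliffordAlgebra

namespace CliffordAlgebra

variable {R M : Type*} [CommRing R] [AddCommGroup M] [Module R M] {Q : QuadraticForm R M}

theorem contractLeft_mul (d : Module.Dual R M) (x y : CliffordAlgebra Q) :
    contractLeft d (x * y) = contractLeft d x * y + involute x * contractLeft d y := by
  induction x using CliffordAlgebra.induction generalizing y with
  | algebraMap r => simp [contractLeft_algebraMap_mul, contractLeft_algebraMap]
  | ι m =>
    rw [contractLeft_ι_mul, contractLeft_ι, involute_ι, Algebra.smul_def, neg_mul,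
      ← sub_eq_add_neg]
  | mul a b iha ihb =>
    rw [mul_assoc, iha, ihb, iha b, map_mul]
    noncomm_ring
  | add a b iha ihb =>
    simp only [add_mul, map_add, iha, ihb]
    abel

theorem contractLeft_mem_span_ι_image {d : Module.Dual R M} {W : Submodule R M}
    (hd : ∀ w ∈ W, d w = 0) {z : CliffordAlgebra Q}
    (hz : z ∈ TwoSidedIdeal.span (ι Q '' (W : Set M))) :
    contractLeft d z ∈ TwoSidedIdeal.span (ι Q '' (W : Set M)) := by
  set I := TwoSidedIdeal.span (ι Q '' (W : Set M))
  rw [TwoSidedIdeal.mem_span_iff_mem_addSubgroup_closure] at hz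
  induction hz using AddSubgroup.closure_induction with
  | mem x hx =>
    obtain ⟨_, ⟨a, -, _, ⟨w, hw, rfl⟩, rfl⟩, b, -, rfl⟩ := hx
    have hιw : ι Q w ∈ I := TwoSidedIdeal.subset_span ⟨w, hw, rfl⟩
    change contractLeft d (a * ι Q w * b) ∈ I
    rw [mul_assoc, contractLeft_mul, contractLeft_mul, contractLeft_ι, hd w hw, map_zero,
      zero_mul, zero_add, involute_ι, neg_mul, mul_neg, ← mul_assoc]
    exact I.add_mem (I.mul_mem_right _ _ (I.mul_mem_left _ _ hιw))
      (I.neg_mem (I.mul_mem_left _ _ (I.mul_mem_right _ _ hιw)))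
  | zero => simpa only [map_zero] using I.zero_mem
  | add x y _ _ hx hy => simpa only [map_add] using I.add_mem hx hy
  | neg x _ hx => simpa only [map_neg] using I.neg_mem hx

end CliffordAlgebra

namespace ExteriorAlgebra

variable {R M : Type*} [CommRing R] [AddCommGroup M] [Module R M]

theorem contractLeft_ι_mul_ι (d : Module.Dual R M) (u v : M) :
    contractLeft d (ι R u * ι R v) = ι R (d u • v - d v • u) := by
  rw [contractLeft_ι_mul, contractLeft_ι, ← Algebra.commutes, ← Algebra.smul_def, map_sub,
    map_smul, map_smul]

theorem contractLeft_mem_range_ι_of_mem_exteriorPower_two (d : Module.Dual R M)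
    {α : ExteriorAlgebra R M} (hα : α ∈ ⋀[R]^2 M) :
    contractLeft d α ∈ LinearMap.range (ι R) := by
  replace hα : α ∈ LinearMap.range (ι R) * LinearMap.range (ι R) := by
    rw [← pow_two]; exact hα
  induction hα using Submodule.mul_induction_on' with
  | mem_mul_mem _ hx _ hy =>
    obtain ⟨u, rfl⟩ := hx
    obtain ⟨v, rfl⟩ := hy
    exact ⟨_, (contractLeft_ι_mul_ι d u v).symm⟩
  | add x _ y _ hx hy => simpa only [map_add] using add_mem hx hy

theorem ι_mul_ι_mul_self (u v : M) : ι R u * ι R v * (ι R u * ι R v) = 0 := by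
  have hswap : ι R v * ι R u = -(ι R u * ι R v) := eq_neg_of_add_eq_zero_left (ι_add_mul_swap v u)
  calc ι R u * ι R v * (ι R u * ι R v) = ι R u * (ι R v * ι R u) * ι R v := by noncomm_ring
    _ = -(ι R u * ι R u * (ι R v * ι R v)) := by rw [hswap]; noncomm_ring
    _ = 0 := by rw [ι_sq_zero, zero_mul, neg_zero]

end ExteriorAlgebra

theorem Submodule.exists_dual_apply_eq_one_of_notMem {K V : Type*} [Field K] [AddCommGroup V]
    [Module K V] {W : Submodule K V} {x : V} (hx : x ∉ W) :
    ∃ f : Module.Dual K V, f x = 1 ∧ ∀ w ∈ W, f w = 0 := by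
  obtain ⟨f, hfx, hfW⟩ := W.exists_dual_map_eq_bot_of_notMem hx inferInstance
  refine ⟨(f x)⁻¹ • f, inv_mul_cancel₀ hfx, fun w hw ↦ ?_⟩
  have hfw : f w = 0 := (Submodule.mem_bot K).mp (hfW ▸ Submodule.mem_map_of_mem hw)
  simp [hfw]

theorem TwoSidedIdeal.mul_self_mem_of_sub_mem_of_mul_self_eq_zero {R : Type*} [Ring R]
    (I : TwoSidedIdeal R) {a z : R} (ha : a - z ∈ I) (hz : z * z = 0) : a * a ∈ I := by
  have hsplit : a * a = a * (a - z) + (a - z) * z + z * z := by noncomm_ring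
  rw [hsplit, hz, add_zero]
  exact I.add_mem (I.mul_mem_left _ _ ha) (I.mul_mem_right _ _ ha)

theorem stmt_4_general {V : Type*} [AddCommGroup V] [Module ℝ V]
    (W : Submodule ℝ V) (χ : V) (hχ : χ ∉ W)
    (α : ExteriorAlgebra ℝ V) (hα : α ∈ ⋀[ℝ]^2 V)
    (h : ExteriorAlgebra.ι ℝ χ * α ∈
      TwoSidedIdeal.span (⇑(ExteriorAlgebra.ι ℝ (M := V)) '' (W : Set V))) :
    α * α ∈ TwoSidedIdeal.span (⇑(ExteriorAlgebra.ι ℝ (M := V)) '' (W : Set V)) := by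
  obtain ⟨φ, hφχ, hφW⟩ := W.exists_dual_apply_eq_one_of_notMem hχ
  obtain ⟨v, hv⟩ := ExteriorAlgebra.contractLeft_mem_range_ι_of_mem_exteriorPower_two φ hα
  have hsub : α - ExteriorAlgebra.ι ℝ χ * ExteriorAlgebra.ι ℝ v ∈
      TwoSidedIdeal.span (⇑(ExteriorAlgebra.ι ℝ (M := V)) '' (W : Set V)) := by
    have hcontract := contractLeft_mem_span_ι_image hφW h
    rwa [contractLeft_ι_mul, hφχ, one_smul, ← hv] at hcontract
  exact TwoSidedIdeal.mul_self_mem_of_sub_mem_of_mul_self_eq_zero _ hsub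
    (ExteriorAlgebra.ι_mul_ι_mul_self χ v)

/-- If `χ ∉ W` and `α ∈ ⋀²V` is such that `χ ∧ α` lies in the two-sided ideal of `Λ(V)`
generated by `W`, then `α ∧ α` also lies in that ideal. -/
theorem stmt_4 {V : Type*} [AddCommGroup V] [Module ℝ V] [FiniteDimensional ℝ V]
    (W : Submodule ℝ V) (χ : V) (hχ : χ ∉ W)
    (α : ExteriorAlgebra ℝ V) (hα : α ∈ ⋀[ℝ]^2 V)
    (h : ExteriorAlgebra.ι ℝ χ * α ∈
      TwoSidedIdeal.span (⇑(ExteriorAlgebra.ι ℝ (M := V)) '' (W : Set V))) :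
    α * α ∈ TwoSidedIdeal.span (⇑(ExteriorAlgebra.ι ℝ (M := V)) '' (W : Set V)) :=
  stmt_4_general W χ hχ α hα h
end

section
/- On ℝ⁵ with standard basis e₁,…,e₅ and coordinates x = (x₁,…,x₅), define for x ∈ ℝ⁵ the subspace Σ₁(x) = { v ∈ ℝ⁵ : v₂ = 0, v₃ + x₅·v₁ = 0 } and the vector fields U(x) = e₁ − x₅·e₃ and W(x) = e₅. Then U(x), W(x) ∈ Σ₁(x) for every x, but for every x the Lie bracket ⁅U,W⁆(x) does not belong to Σ₁(x). -/
/-- The vector fields `U = e₁ − x₅·e₃` and `W = e₅` on `ℝ⁵` belong at each point to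
`Σ₁(x) = {v | v₂ = 0, v₃ + x₅v₁ = 0}`, but their Lie bracket never does. -/
theorem stmt_11
    (U W : (Fin 5 → ℝ) → (Fin 5 → ℝ))
    (hU : ∀ x, U x = (Pi.single 0 1 : Fin 5 → ℝ) - x 4 • (Pi.single 2 1 : Fin 5 → ℝ))
    (hW : ∀ x, W x = (Pi.single 4 1 : Fin 5 → ℝ)) :
    ∀ x : Fin 5 → ℝ,
      U x ∈ {v : Fin 5 → ℝ | v 1 = 0 ∧ v 2 + x 4 * v 0 = 0} ∧
      W x ∈ {v : Fin 5 → ℝ | v 1 = 0 ∧ v 2 + x 4 * v 0 = 0} ∧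
      VectorField.lieBracket ℝ U W x ∉ {v : Fin 5 → ℝ | v 1 = 0 ∧ v 2 + x 4 * v 0 = 0} := by
  intro x
  have hUf : U = fun x : Fin 5 → ℝ =>
      (Pi.single 0 1 : Fin 5 → ℝ) - x 4 • (Pi.single 2 1 : Fin 5 → ℝ) := funext hU
  have hWf : W = fun _ : Fin 5 → ℝ => (Pi.single 4 1 : Fin 5 → ℝ) := funext hW
  have hDW : fderiv ℝ W x = 0 := by rw [hWf]; exact fderiv_const_apply _
  have hDU : HasFDerivAt U
      (-((ContinuousLinearMap.proj 4 : (Fin 5 → ℝ) →L[ℝ] ℝ).smulRight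
        (Pi.single 2 1 : Fin 5 → ℝ))) x := by
    rw [hUf]
    exact ((ContinuousLinearMap.proj 4 : (Fin 5 → ℝ) →L[ℝ] ℝ).hasFDerivAt.smul_const
      (Pi.single 2 1)).const_sub _
  have hbr : VectorField.lieBracket ℝ U W x = (Pi.single 2 1 : Fin 5 → ℝ) := by
    rw [VectorField.lieBracket, hDW, hDU.fderiv, hW x]
    simp [ContinuousLinearMap.smulRight_apply, ContinuousLinearMap.proj_apply]
  refine ⟨?_, ?_, ?_⟩
  · rw [hU x]
    constructor <;> simp [Pi.single_apply]
  · rw [hW x]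
    constructor <;> simp [Pi.single_apply]
  · rw [hbr]
    intro h
    have := h.2
    simp [Pi.single_apply] at this
end

section
/- On ℝ⁶ with standard basis e₁,…,e₆ and coordinates x = (x₁,…,x₆), define the vector fields X₁(x) = e₄ − x₆·e₃, X₂(x) = e₅ − x₄·e₁, X₃(x) = e₆ − x₅·e₂. Then for every x ∈ ℝ⁶, the six vectors X₁(x), X₂(x), X₃(x), ⁅X₁,X₂⁆(x), ⁅X₂,X₃⁆(x), ⁅X₃,X₁⁆(x) span ℝ⁶. -/
/-! The three fields are affine, `X(x) = a − φ(x)·b` with `φ` a coordinate functional, so each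
bracket is a constant vector: `⁅X₁,X₂⁆ = −e₁`, `⁅X₂,X₃⁆ = −e₂`, `⁅X₃,X₁⁆ = −e₃`. These three
vectors, together with `X₁ + x₆·e₃ = e₄`, `X₂ + x₄·e₁ = e₅` and `X₃ + x₅·e₂ = e₆`, give the
standard basis (`eᵢ` is `Pi.single (i - 1) 1`). -/

open ContinuousLinearMap VectorField Submodule

section AffineField

variable {𝕜 E : Type*} [NontriviallyNormedField 𝕜] [NormedAddCommGroup E] [NormedSpace 𝕜 E]

theorem hasFDerivAt_const_sub_smul (a b : E) (φ : E →L[𝕜] 𝕜) (x : E) :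
    HasFDerivAt (fun y => a - φ y • b) (-φ.smulRight b) x :=
  (φ.hasFDerivAt.smul_const b).const_sub a

theorem lieBracket_const_sub_smul (a b c d : E) (φ ψ : E →L[𝕜] 𝕜) (x : E) :
    lieBracket 𝕜 (fun y => a - φ y • b) (fun y => c - ψ y • d) x
      = φ (c - ψ x • d) • b - ψ (a - φ x • b) • d := by
  rw [lieBracket, (hasFDerivAt_const_sub_smul a b φ x).fderiv,
    (hasFDerivAt_const_sub_smul c d ψ x).fderiv]
  simp only [neg_apply, smulRight_apply]
  abel

end AffineField

theorem span_pi_single_eq_top {R : Type*} [Ring R] (s t u : R) :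
    span R
      ({Pi.single 3 1 - s • Pi.single 2 1, Pi.single 4 1 - t • Pi.single 0 1,
        Pi.single 5 1 - u • Pi.single 1 1,
        -Pi.single 0 1, -Pi.single 1 1, -Pi.single 2 1} : Set (Fin 6 → R)) = ⊤ := by
  rw [eq_top_iff, ← (Pi.basisFun R (Fin 6)).span_eq, span_le, Set.range_subset_iff]
  set p := span R (_ : Set (Fin 6 → R))
  have h₀ : Pi.single 0 1 ∈ p := p.neg_mem_iff.mp (subset_span (by simp))
  have h₁ : Pi.single 1 1 ∈ p := p.neg_mem_iff.mp (subset_span (by simp))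
  have h₂ : Pi.single 2 1 ∈ p := p.neg_mem_iff.mp (subset_span (by simp))
  have h₃ : Pi.single 3 1 ∈ p :=
    (p.sub_mem_iff_left (p.smul_mem s h₂)).mp (subset_span (by simp))
  have h₄ : Pi.single 4 1 ∈ p :=
    (p.sub_mem_iff_left (p.smul_mem t h₀)).mp (subset_span (by simp))
  have h₅ : Pi.single 5 1 ∈ p :=
    (p.sub_mem_iff_left (p.smul_mem u h₁)).mp (subset_span (by simp))
  intro i
  fin_cases i <;> simpa

/-- For the vector fields `X₁ = e₄ − x₆·e₃`, `X₂ = e₅ − x₄·e₁`, `X₃ = e₆ − x₅·e₂` on `ℝ⁶`,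
the three fields together with their pairwise Lie brackets span `ℝ⁶` at every point. -/
theorem stmt_12
    (X₁ X₂ X₃ : (Fin 6 → ℝ) → (Fin 6 → ℝ))
    (hX₁ : ∀ x, X₁ x = (Pi.single 3 1 : Fin 6 → ℝ) - x 5 • (Pi.single 2 1 : Fin 6 → ℝ))
    (hX₂ : ∀ x, X₂ x = (Pi.single 4 1 : Fin 6 → ℝ) - x 3 • (Pi.single 0 1 : Fin 6 → ℝ))
    (hX₃ : ∀ x, X₃ x = (Pi.single 5 1 : Fin 6 → ℝ) - x 4 • (Pi.single 1 1 : Fin 6 → ℝ)) :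
    ∀ x : Fin 6 → ℝ,
      Submodule.span ℝ
        ({X₁ x, X₂ x, X₃ x,
          VectorField.lieBracket ℝ X₁ X₂ x,
          VectorField.lieBracket ℝ X₂ X₃ x,
          VectorField.lieBracket ℝ X₃ X₁ x} : Set (Fin 6 → ℝ)) = ⊤ := by
  have eX₁ : X₁ = fun y => Pi.single 3 1 - (proj 5 : (Fin 6 → ℝ) →L[ℝ] ℝ) y • Pi.single 2 1 :=
    funext hX₁
  have eX₂ : X₂ = fun y => Pi.single 4 1 - (proj 3 : (Fin 6 → ℝ) →L[ℝ] ℝ) y • Pi.single 0 1 :=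
    funext hX₂
  have eX₃ : X₃ = fun y => Pi.single 5 1 - (proj 4 : (Fin 6 → ℝ) →L[ℝ] ℝ) y • Pi.single 1 1 :=
    funext hX₃
  intro x
  have b₁₂ : lieBracket ℝ X₁ X₂ x = -Pi.single 0 1 := by
    rw [eX₁, eX₂, lieBracket_const_sub_smul]; simp
  have b₂₃ : lieBracket ℝ X₂ X₃ x = -Pi.single 1 1 := by
    rw [eX₂, eX₃, lieBracket_const_sub_smul]; simp
  have b₃₁ : lieBracket ℝ X₃ X₁ x = -Pi.single 2 1 := by
    rw [eX₃, eX₁, lieBracket_const_sub_smul]; simp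
  rw [hX₁, hX₂, hX₃, b₁₂, b₂₃, b₃₁]
  exact span_pi_single_eq_top _ _ _
end

section
/- For x ∈ ℝ⁶, let Σ(x) = { v ∈ ℝ⁶ : v₁ + x₄·v₅ = 0, v₂ + x₅·v₆ = 0, v₃ + x₆·v₄ = 0 }. Then for every x ∈ ℝ⁶, Σ(x) is 3-dimensional, and for every pair of linearly independent vectors u, v ∈ Σ(x), the three numbers u₄v₅ − u₅v₄, u₅v₆ − u₆v₅, u₆v₄ − u₄v₆ are not all zero; consequently there is no 2-dimensional subspace of Σ(x) on which all three alternating forms vanish identically. -/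
/-!
Σ(x) is the graph of a linear map over the coordinates `(v₄, v₅, v₆)`, so projecting onto those
coordinates is injective on Σ(x) and preserves linear independence of pairs. The three forms are
the components of the cross product of the projections, and a cross product in `ℝ³` vanishes
only on linearly dependent pairs.
-/

open Module LinearMap Matrix

theorem Submodule.exists_linearIndependent_pair_of_one_lt_finrank {K V : Type*} [DivisionRing K]
    [AddCommGroup V] [Module K V] {E : Submodule K V} (h : 1 < finrank K E) :
    ∃ u ∈ E, ∃ v ∈ E, LinearIndependent K ![u, v] := by
  have : Nontrivial E := nontrivial_of_finrank_pos (R := K) (by omega)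
  obtain ⟨u, hu⟩ := exists_ne (0 : E)
  obtain ⟨v, huv⟩ := _root_.exists_linearIndependent_pair_of_one_lt_finrank h hu
  have hcomp : ![(u : V), v] = E.subtype ∘ ![u, v] := by
    funext i; fin_cases i <;> rfl
  exact ⟨u, u.2, v, v.2, hcomp ▸ huv.map' E.subtype E.ker_subtype⟩

namespace SingularPfaffianExample

def constraints (x : Fin 6 → ℝ) : (Fin 6 → ℝ) →ₗ[ℝ] (Fin 3 → ℝ) :=
  LinearMap.pi ![proj 0 + x 3 • proj 4, proj 1 + x 4 • proj 5, proj 2 + x 5 • proj 3]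

/-- The paper's coordinates `(v₄, v₅, v₆)`; indices here are `0`-based. -/
def fiberCoords : (Fin 6 → ℝ) →ₗ[ℝ] (Fin 3 → ℝ) :=
  funLeft ℝ ℝ ![3, 4, 5]

theorem mem_ker_constraints {x v : Fin 6 → ℝ} :
    v ∈ ker (constraints x) ↔
      v 0 + x 3 * v 4 = 0 ∧ v 1 + x 4 * v 5 = 0 ∧ v 2 + x 5 * v 3 = 0 := by
  simp [constraints, funext_iff, Fin.forall_fin_succ]

theorem constraints_surjective (x : Fin 6 → ℝ) : Function.Surjective (constraints x) := by
  intro w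
  refine ⟨![w 0, w 1, w 2, 0, 0, 0], ?_⟩
  ext i
  fin_cases i <;> simp [constraints]

theorem finrank_ker_constraints (x : Fin 6 → ℝ) : finrank ℝ (ker (constraints x)) = 3 := by
  have h := finrank_range_add_finrank_ker (constraints x)
  rw [range_eq_top.mpr (constraints_surjective x), finrank_top] at h
  simp only [finrank_pi, Fintype.card_fin] at h
  omega

theorem injOn_fiberCoords (x : Fin 6 → ℝ) :
    Set.InjOn fiberCoords (ker (constraints x) : Set (Fin 6 → ℝ)) := by
  refine disjoint_ker_iff_injOn.mp (Submodule.disjoint_def.mpr fun v hv hv' => ?_)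
  obtain ⟨h0, h1, h2⟩ := mem_ker_constraints.mp hv
  have h3 : v 3 = 0 := congrFun hv' 0
  have h4 : v 4 = 0 := congrFun hv' 1
  have h5 : v 5 = 0 := congrFun hv' 2
  ext i
  fin_cases i <;> simp_all

theorem cross_fiberCoords (u v : Fin 6 → ℝ) :
    fiberCoords u ⨯₃ fiberCoords v =
      ![u 4 * v 5 - u 5 * v 4, u 5 * v 3 - u 3 * v 5, u 3 * v 4 - u 4 * v 3] := by
  simp [cross_apply, fiberCoords]

theorem cross_fiberCoords_ne_zero {x u v : Fin 6 → ℝ} (hu : u ∈ ker (constraints x))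
    (hv : v ∈ ker (constraints x)) (huv : LinearIndependent ℝ ![u, v]) :
    fiberCoords u ⨯₃ fiberCoords v ≠ 0 := by
  have hspan : Submodule.span ℝ (Set.range ![u, v]) ≤ ker (constraints x) :=
    Submodule.span_le.mpr (Set.range_subset_iff.mpr (Fin.forall_fin_two.mpr ⟨hu, hv⟩))
  have hcomp : ![fiberCoords u, fiberCoords v] = fiberCoords ∘ ![u, v] := by
    funext i; fin_cases i <;> rfl
  rw [crossProduct_ne_zero_iff_linearIndependent, hcomp]
  exact huv.map_injOn fiberCoords ((injOn_fiberCoords x).mono hspan)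

theorem not_forms_eq_zero {x u v : Fin 6 → ℝ} (hu : u ∈ ker (constraints x))
    (hv : v ∈ ker (constraints x)) (huv : LinearIndependent ℝ ![u, v]) :
    ¬(u 3 * v 4 - u 4 * v 3 = 0 ∧ u 4 * v 5 - u 5 * v 4 = 0 ∧ u 5 * v 3 - u 3 * v 5 = 0) := by
  rintro ⟨h₁, h₂, h₃⟩
  apply cross_fiberCoords_ne_zero hu hv huv
  simp [cross_fiberCoords, h₁, h₂, h₃]

end SingularPfaffianExample

open SingularPfaffianExample in
/-- `Σ(x) = {v | v₁ + x₄v₅ = 0, v₂ + x₅v₆ = 0, v₃ + x₆v₄ = 0}` is a 3-dimensional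
subspace of `ℝ⁶`; on any two linearly independent vectors of `Σ(x)` the three forms
`dx₄∧dx₅`, `dx₅∧dx₆`, `dx₆∧dx₄` do not all vanish, so no 2-dimensional subspace of
`Σ(x)` is an integral element. -/
theorem stmt_13 (x : Fin 6 → ℝ) :
    (∃ S : Submodule ℝ (Fin 6 → ℝ),
      (S : Set (Fin 6 → ℝ)) =
        {v | v 0 + x 3 * v 4 = 0 ∧ v 1 + x 4 * v 5 = 0 ∧ v 2 + x 5 * v 3 = 0} ∧
      Module.finrank ℝ S = 3) ∧
    (∀ u v : Fin 6 → ℝ,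
      u ∈ {v : Fin 6 → ℝ | v 0 + x 3 * v 4 = 0 ∧ v 1 + x 4 * v 5 = 0 ∧ v 2 + x 5 * v 3 = 0} →
      v ∈ {v : Fin 6 → ℝ | v 0 + x 3 * v 4 = 0 ∧ v 1 + x 4 * v 5 = 0 ∧ v 2 + x 5 * v 3 = 0} →
      LinearIndependent ℝ ![u, v] →
      ¬(u 3 * v 4 - u 4 * v 3 = 0 ∧ u 4 * v 5 - u 5 * v 4 = 0 ∧
        u 5 * v 3 - u 3 * v 5 = 0)) ∧
    ¬ ∃ E : Submodule ℝ (Fin 6 → ℝ),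
      (E : Set (Fin 6 → ℝ)) ⊆
        {v | v 0 + x 3 * v 4 = 0 ∧ v 1 + x 4 * v 5 = 0 ∧ v 2 + x 5 * v 3 = 0} ∧
      Module.finrank ℝ E = 2 ∧
      ∀ u ∈ E, ∀ v ∈ E,
        u 3 * v 4 - u 4 * v 3 = 0 ∧ u 4 * v 5 - u 5 * v 4 = 0 ∧
        u 5 * v 3 - u 3 * v 5 = 0 := by
  refine ⟨⟨ker (constraints x), Set.ext fun _ => mem_ker_constraints,
    finrank_ker_constraints x⟩,
    fun u v hu hv => not_forms_eq_zero (mem_ker_constraints.mpr hu) (mem_ker_constraints.mpr hv),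
    ?_⟩
  rintro ⟨E, hE, hrank, hforms⟩
  obtain ⟨u, hu, v, hv, huv⟩ :=
    Submodule.exists_linearIndependent_pair_of_one_lt_finrank (by omega : 1 < finrank ℝ E)
  exact not_forms_eq_zero (mem_ker_constraints.mpr (hE hu)) (mem_ker_constraints.mpr (hE hv)) huv
    (hforms u hu v hv)
end

section
/- For x ∈ ℝ⁶, let Σ(x) = { v ∈ ℝ⁶ : v₁ + x₄·v₅ = 0, v₂ + x₅·v₆ = 0, v₃ = 0 }. Then for every x ∈ ℝ⁶, the restrictions to Σ(x) of the two alternating bilinear forms B₁(u,v) = u₄v₅ − u₅v₄ and B₂(u,v) = u₅v₆ − u₆v₅ are linearly independent elements of the space of alternating bilinear forms on Σ(x); consequently, a linear combination c₁B₁ + c₂B₂ vanishes identically on Σ(x) only when c₁ = c₂ = 0. -/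
lemma vec6_eval (a b c d e f : ℝ) :
    ![a,b,c,d,e,f] 0 = a ∧ ![a,b,c,d,e,f] 1 = b ∧ ![a,b,c,d,e,f] 2 = c ∧
    ![a,b,c,d,e,f] 3 = d ∧ ![a,b,c,d,e,f] 4 = e ∧ ![a,b,c,d,e,f] 5 = f :=
  ⟨rfl, rfl, rfl, rfl, rfl, rfl⟩

/-- On `Σ(x) = {v | v₁ + x₄v₅ = 0, v₂ + x₅v₆ = 0, v₃ = 0} ⊆ ℝ⁶`, the restrictions of the
alternating forms `B₁(u,v) = u₄v₅ − u₅v₄` and `B₂(u,v) = u₅v₆ − u₆v₅` are linearly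
independent: a combination `c₁B₁ + c₂B₂` vanishes identically on `Σ(x)` only if
`c₁ = c₂ = 0`. -/
theorem stmt_14 (x : Fin 6 → ℝ) (c₁ c₂ : ℝ)
    (h : ∀ u v : Fin 6 → ℝ,
      u ∈ {v : Fin 6 → ℝ | v 0 + x 3 * v 4 = 0 ∧ v 1 + x 4 * v 5 = 0 ∧ v 2 = 0} →
      v ∈ {v : Fin 6 → ℝ | v 0 + x 3 * v 4 = 0 ∧ v 1 + x 4 * v 5 = 0 ∧ v 2 = 0} →
      c₁ * (u 3 * v 4 - u 4 * v 3) + c₂ * (u 4 * v 5 - u 5 * v 4) = 0) :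
    c₁ = 0 ∧ c₂ = 0 := by
  have e1 := vec6_eval 0 0 0 1 0 0
  have e2 := vec6_eval (-x 3) 0 0 0 1 0
  have e3 := vec6_eval 0 (-x 4) 0 0 0 1
  obtain ⟨a0,a1,a2,a3,a4,a5⟩ := e1
  obtain ⟨b0,b1,b2,b3,b4,b5⟩ := e2
  obtain ⟨d0,d1,d2,d3,d4,d5⟩ := e3
  have h1 := h ![0,0,0,1,0,0] ![-x 3,0,0,0,1,0]
    ⟨by rw [a0, a4]; ring, by rw [a1, a5]; ring, a2⟩
    ⟨by rw [b0, b4]; ring, by rw [b1, b5]; ring, b2⟩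
  have h2 := h ![-x 3,0,0,0,1,0] ![0,-x 4,0,0,0,1]
    ⟨by rw [b0, b4]; ring, by rw [b1, b5]; ring, b2⟩
    ⟨by rw [d0, d4]; ring, by rw [d1, d5]; ring, d2⟩
  rw [a3, a4, a5, b3, b4, b5] at h1
  rw [b3, b4, b5, d3, d4, d5] at h2
  constructor <;> linarith
end
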